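/- Let G be a compact, Hausdorff, totally disconnected topological group and α a topologically transitive topological group automorphism of G. Then: (1) the contraction group con(α) is dense in G; and (2) the closure of the homoclinic group bcg(α) contains the commutator subgroup [G,G]. -/

import Mathlib

open Pointwise Filter Topology

variable {G : Type*}

/-- `V₊ = ⋂_{k ≥ 0} α^k(V)`. -/
def plusPart [Group G] (α : MulAut G) (V : Set G) : Set G :=
  ⋂ k : ℕ, ⇑(α ^ k) '' V

/-- `V₋ = ⋂_{k ≥ 0} α^{-k}(V)`. -/
def minusPart [Group G] (α : MulAut G) (V : Set G) : Set G :=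
  ⋂ k : ℕ, ⇑(α⁻¹ ^ k) '' V

/-- `V` is tidy above for `α` if `V = V₊V₋`. -/
def TidyAbove [Group G] (α : MulAut G) (V : Set G) : Prop :=
  V = plusPart α V * minusPart α V

/-- `V` is tidy below for `α` if `V₊₊` and `V₋₋` are closed. -/
def TidyBelow [Group G] [TopologicalSpace G] (α : MulAut G) (V : Set G) : Prop :=
  IsClosed (⋃ k : ℕ, ⇑(α ^ k) '' plusPart α V) ∧
  IsClosed (⋃ k : ℕ, ⇑(α⁻¹ ^ k) '' minusPart α V)

/-- `V` is tidy for `α` if it is tidy above and tidy below. -/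
def Tidy [Group G] [TopologicalSpace G] (α : MulAut G) (V : Set G) : Prop :=
  TidyAbove α V ∧ TidyBelow α V

/-- The nub of `α`: the intersection of all compact open subgroups tidy for `α`. -/
def nub [Group G] [TopologicalSpace G] (α : MulAut G) : Subgroup G :=
  ⨅ V ∈ {V : Subgroup G | IsCompact (V : Set G) ∧ IsOpen (V : Set G) ∧ Tidy α (V : Set G)}, V

/-- The contraction group `con(α) = { x | α^n(x) → 1 as n → ∞ }`. -/
def conSet [Group G] [TopologicalSpace G] (α : MulAut G) : Set G :=
  {x : G | Tendsto (fun n : ℕ => (α ^ n) x) atTop (𝓝 1)}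

/-- The homoclinic (two-sided contraction) group `bcg(α) = con(α) ∩ con(α⁻¹)`. -/
def bcgSet [Group G] [TopologicalSpace G] (α : MulAut G) : Set G :=
  conSet α ∩ conSet α⁻¹

/-- The bounded contraction group `bcon(α)`. -/
def bconSet [Group G] [TopologicalSpace G] (α : MulAut G) : Set G :=
  {x ∈ conSet α | IsCompact (closure (Set.range fun n : ℕ => (α⁻¹ ^ n) x))}

/-- Image of a subgroup under an automorphism. -/
def mapAut [Group G] (α : MulAut G) (V : Subgroup G) : Subgroup G where
  carrier := ⇑α '' (V : Set G)
  one_mem' := ⟨1, V.one_mem, map_one α⟩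
  mul_mem' := by
    rintro a b ⟨a', ha, rfl⟩ ⟨b', hb, rfl⟩
    exact ⟨a' * b', V.mul_mem ha hb, map_mul α a' b'⟩
  inv_mem' := by
    rintro a ⟨a', ha, rfl⟩
    exact ⟨a'⁻¹, V.inv_mem ha, map_inv α a'⟩

/-- `V₊` as a subgroup. -/
def plusSub [Group G] (α : MulAut G) (V : Subgroup G) : Subgroup G :=
  ⨅ k : ℕ, mapAut (α ^ k) V

/-- `V₋` as a subgroup. -/
def minusSub [Group G] (α : MulAut G) (V : Subgroup G) : Subgroup G :=
  ⨅ k : ℕ, mapAut (α⁻¹ ^ k) V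

/-- The shift automorphism of `F^ℤ`. -/
def shiftAut (F : Type*) [Group F] : MulAut (ℤ → F) where
  toFun f := fun n => f (n + 1)
  invFun f := fun n => f (n - 1)
  left_inv f := by funext n; show f (n - 1 + 1) = f n; congr 1; omega
  right_inv f := by funext n; show f (n + 1 - 1) = f n; congr 1; omega
  map_mul' f g := rfl


/-!
`G` is profinite, so it suffices to find, in every coset `g N₀` of an open normal subgroup, a
point `y` with `α^n y ∈ N` eventually, simultaneously for all open normal `N`. For a single `N`
the map `y ↦ (α^n y N)ₙ` realises `α` as a shift on a closed subgroup of `(G ⧸ N)^ℤ`; since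
chains of subgroups of the finite group `G ⧸ N` stabilise, this group shift has finite type
(bounded memory) and a shadowing property inside every closed invariant subgroup. Topological
transitivity then gives an `m₀` such that every coset of `N₀` meets
`{y | α^n y ∈ N₀ for n ≥ m₀}`. A maximal consistent family of such tail constraints (Zorn)
constrains every `N`: the orbit of a point satisfying the family approaches the closed
invariant subgroup cut out by the constraints, hence is a pseudo-orbit there, and a shadowing
orbit corrects the point so that it also satisfies a constraint for `N`.

Applied to `α` and `α⁻¹`, `con(α)` and `con(α⁻¹)` are dense. For `p ∈ con(α)` and
`r ∈ con(α⁻¹)` the commutator `⁅p, r⁆` lies in `bcg(α)`, since `⁅x, z⁆ ∈ N` as soon as `x ∈ N`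
or `z ∈ N` for a normal `N`; by continuity every commutator lies in the closure of `bcg(α)`,
which is a closed subgroup.
-/

open scoped commutatorElement

namespace MulAut

open Set

section Window

variable [Group G]

lemma zpow_add_apply (α : MulAut G) (a b : ℤ) (x : G) :
    (α ^ (a + b)) x = (α ^ a) ((α ^ b) x) := by
  rw [zpow_add, mul_apply]

def window (α : MulAut G) (N : Subgroup G) (S : Set ℤ) : Subgroup G :=
  ⨅ n ∈ S, N.comap (α ^ n).toMonoidHom

variable {α : MulAut G} {N : Subgroup G} {S T : Set ℤ} {y : G}

@[simp]
lemma mem_window : y ∈ α.window N S ↔ ∀ n ∈ S, (α ^ n) y ∈ N := by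
  simp [window, Subgroup.mem_iInf]

lemma window_anti (h : S ⊆ T) : α.window N T ≤ α.window N S :=
  fun _ hy => mem_window.2 fun n hn => mem_window.1 hy n (h hn)

lemma window_union : α.window N (S ∪ T) = α.window N S ⊓ α.window N T := by
  ext y
  simp only [Subgroup.mem_inf, mem_window, mem_union]
  exact ⟨fun h => ⟨fun n hn => h n (.inl hn), fun n hn => h n (.inr hn)⟩,
    fun h n hn => hn.elim (h.1 n) (h.2 n)⟩

instance window_normal [hN : N.Normal] : (α.window N S).Normal :=
  ⟨fun x hx g => mem_window.2 fun n hn => by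
    simpa only [map_mul, map_inv] using hN.conj_mem _ (mem_window.1 hx n hn) ((α ^ n) g)⟩

lemma zpow_apply_mem_window (k : ℤ) :
    (α ^ k) y ∈ α.window N S ↔ y ∈ α.window N ((· - k) ⁻¹' S) := by
  simp only [mem_window, mem_preimage, ← zpow_add_apply]
  exact ⟨fun h n hn => by simpa using h _ hn, fun h n hn => h (n + k) (by simpa using hn)⟩

end Window

section Topology

variable [Group G] [TopologicalSpace G] {α : MulAut G}

lemma continuous_zpow (hα : Continuous α) (hα' : Continuous ⇑α⁻¹) (n : ℤ) :
    Continuous ⇑(α ^ n) := by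
  induction n using Int.induction_on with
  | zero => simpa using continuous_id
  | succ n ih => rw [zpow_add_one, coe_mul]; exact ih.comp hα
  | pred n ih => rw [zpow_sub_one, coe_mul]; exact ih.comp hα'

lemma isClosed_window (hα : Continuous α) (hα' : Continuous ⇑α⁻¹) {N : Subgroup G}
    (hN : IsClosed (N : Set G)) (S : Set ℤ) : IsClosed (α.window N S : Set G) := by
  simp only [window, Subgroup.coe_iInf, Subgroup.coe_comap]
  exact isClosed_biInter fun n _ => hN.preimage (continuous_zpow hα hα' n)

lemma isOpen_window (hα : Continuous α) (hα' : Continuous ⇑α⁻¹) {N : Subgroup G}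
    (hN : IsOpen (N : Set G)) {S : Set ℤ} (hS : S.Finite) : IsOpen (α.window N S : Set G) := by
  simp only [window, Subgroup.coe_iInf, Subgroup.coe_comap]
  exact hS.isOpen_biInter fun n _ => hN.preimage (continuous_zpow hα hα' n)

end Topology

section ChainCondition

variable [Group G] [TopologicalSpace G] [IsTopologicalGroup G] [CompactSpace G]
  {N : Subgroup G} [N.Normal]

lemma finite_subgroups_ge (hN : IsOpen (N : Set G)) : Finite {H : Subgroup G // N ≤ H} := by
  have := N.quotient_finite_of_isOpen hN
  exact Finite.of_equiv _ (QuotientGroup.comapMk'OrderIso N).toEquiv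

lemma monotone_stabilizes (hN : IsOpen (N : Set G)) {T : ℕ → Subgroup G} (hNT : ∀ j, N ≤ T j)
    (hT : Monotone T) : ∃ K, ∀ j, K ≤ j → T K = T j := by
  have := finite_subgroups_ge hN
  obtain ⟨K, hK⟩ := WellFoundedGT.monotone_chain_condition
    (⟨fun j => ⟨T j, hNT j⟩, fun _ _ h => hT h⟩ : ℕ →o {H : Subgroup G // N ≤ H})
  exact ⟨K, fun j hj => congrArg Subtype.val (hK j hj)⟩

lemma antitone_stabilizes (hN : IsOpen (N : Set G)) {T : ℕ → Subgroup G} (hNT : ∀ j, N ≤ T j)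
    (hT : Antitone T) : ∃ K, ∀ j, K ≤ j → T K = T j := by
  have := finite_subgroups_ge hN
  obtain ⟨K, hK⟩ := WellFoundedLT.antitone_chain_condition
    (f := fun j => (⟨T j, hNT j⟩ : {H : Subgroup G // N ≤ H})) fun _ _ h => hT h
  exact ⟨K, fun j hj => congrArg Subtype.val (hK j hj)⟩

lemma mem_sup_iInf_of_antitone (hN : IsClosed (N : Set G)) {H : ℕ → Subgroup G}
    (hH : ∀ t, IsClosed (H t : Set G)) (hanti : Antitone H) {y : G} (hy : ∀ t, y ∈ N ⊔ H t) :
    y ∈ N ⊔ ⨅ t, H t := by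
  set F : ℕ → Set G := fun t => (H t : Set G) ∩ (fun h => y * h⁻¹) ⁻¹' N
  have hF : ∀ t, IsClosed (F t) := fun t =>
    (hH t).inter (hN.preimage (continuous_const.mul continuous_inv))
  have hne : ∀ t, (F t).Nonempty := fun t => by
    obtain ⟨a, ha, h, hh, rfl⟩ := Subgroup.mem_sup_of_normal_left.1 (hy t)
    exact ⟨h, hh, by simpa using ha⟩
  obtain ⟨h, hh⟩ := IsCompact.nonempty_iInter_of_sequence_nonempty_isCompact_isClosed F
    (fun t => inter_subset_inter_left _ (hanti t.le_succ)) hne (hF 0).isCompact hF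
  rw [mem_iInter] at hh
  exact Subgroup.mem_sup_of_normal_left.2
    ⟨y * h⁻¹, (hh 0).2, h, Subgroup.mem_iInf.2 fun t => (hh t).1, by group⟩

end ChainCondition

section FiniteType

/-- The bounded-memory (finite-type) property of the group shift `y ↦ (α^n y N)ₙ`. -/
def HasMemory [Group G] (α : MulAut G) (N : Subgroup G) (K : ℕ) : Prop :=
  ∀ a c : ℤ, a ≤ c + 1 - K →
    α.window N (Icc (c + 1 - K) c) ≤ α.window N {c + 1} ⊔ α.window N (Icc a c)

lemma HasMemory.window_le_sup_window_succ [Group G] {α : MulAut G} {N : Subgroup G}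
    [hNn : N.Normal] {K : ℕ} (hK : α.HasMemory N K) {m c : ℤ} (hm : 0 ≤ m)
    (hmc : m + K ≤ c + 1) (hc : 0 ≤ c) :
    α.window N (Icc m c) ≤ N ⊔ α.window N (Icc m (c + 1)) := by
  intro y hy
  obtain ⟨u, hu, q, hq, rfl⟩ := Subgroup.mem_sup_of_normal_left.1
    (hK 0 c (by omega) (window_anti (Icc_subset_Icc (by omega) le_rfl) hy))
  have hqN : q ∈ N := by simpa using mem_window.1 hq 0 ⟨le_rfl, hc⟩
  have hq' : q ∈ α.window N (Icc m c) := window_anti (Icc_subset_Icc hm le_rfl) hq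
  have hconj : q⁻¹ * (u * q) ∈ α.window N (Icc m c ∪ {c + 1}) := by
    rw [window_union]
    refine ⟨Subgroup.mul_mem _ (Subgroup.inv_mem _ hq') hy, ?_⟩
    simpa [mul_assoc] using (window_normal (hN := hNn)).conj_mem u hu q⁻¹
  have hsub : Icc m (c + 1) ⊆ Icc m c ∪ {c + 1} := fun n hn => by
    simp only [mem_Icc, mem_union, mem_singleton_iff] at hn ⊢
    omega
  simpa using Subgroup.mul_mem_sup hqN (window_anti hsub hconj)

variable [Group G] [TopologicalSpace G] [IsTopologicalGroup G] [CompactSpace G]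
  {α : MulAut G} {N : Subgroup G} [N.Normal]

lemma exists_hasMemory (hN : IsOpen (N : Set G)) : ∃ K, α.HasMemory N K := by
  obtain ⟨K, hK⟩ := antitone_stabilizes hN (T := fun j : ℕ => N ⊔ α.window N (Icc (-j) (-1)))
    (fun _ => le_sup_left)
    (fun i j hij => sup_le_sup_left (window_anti (Icc_subset_Icc (by omega) le_rfl)) _)
  refine ⟨K, fun a c hac y hy => ?_⟩
  have hy' : (α ^ (c + 1)) y ∈ N ⊔ α.window N (Icc (-(c + 1 - a).toNat) (-1)) := by
    rw [← hK _ (by omega)]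
    refine Subgroup.mem_sup_right ((zpow_apply_mem_window _).2 (window_anti (fun n hn => ?_) hy))
    simp only [preimage_sub_const_Icc, mem_Icc] at hn ⊢
    omega
  obtain ⟨u, hu, q, hq, huq⟩ := Subgroup.mem_sup_of_normal_left.1 hy'
  have hy_eq : y = (α ^ (-(c + 1))) u * (α ^ (-(c + 1))) q := by
    rw [← map_mul, huq, ← zpow_add_apply, neg_add_cancel, zpow_zero, one_apply]
  rw [hy_eq]
  refine Subgroup.mul_mem_sup ?_ ((zpow_apply_mem_window _).2 (window_anti (fun n hn => ?_) hq))
  · simpa [← zpow_add_apply] using hu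
  · simp only [preimage_sub_const_Icc, mem_Icc] at hn ⊢
    omega

theorem exists_window_Icc_le_sup_window_Ici (hα : Continuous α) (hα' : Continuous ⇑α⁻¹)
    (hN : IsOpen (N : Set G)) :
    ∃ K : ℕ, ∀ m : ℕ, α.window N (Icc m (m + K)) ≤ N ⊔ α.window N (Ici m) := by
  obtain ⟨K, hK⟩ := exists_hasMemory (α := α) hN
  refine ⟨K, fun m => ?_⟩
  have hgrow : ∀ t : ℕ, α.window N (Icc m (m + K)) ≤ N ⊔ α.window N (Icc m (m + K + t)) := by
    intro t
    induction t with
    | zero => simp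
    | succ t ih =>
      refine ih.trans (sup_le le_sup_left ?_)
      simpa [add_assoc] using hK.window_le_sup_window_succ (Nat.cast_nonneg m)
        (c := m + K + t) (by omega) (by omega)
  have hNc : IsClosed (N : Set G) := N.isClosed_of_isOpen hN
  have htail : ⨅ t : ℕ, α.window N (Icc m (m + K + t)) ≤ α.window N (Ici m) :=
    fun z hz => mem_window.2 fun n hn =>
      mem_window.1 (Subgroup.mem_iInf.1 hz (n - m).toNat) n ⟨mem_Ici.1 hn, by omega⟩
  intro y hy
  exact sup_le_sup_left htail _ <| mem_sup_iInf_of_antitone hNc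
    (fun t => isClosed_window hα hα' hNc _)
    (fun i j hij => window_anti (Icc_subset_Icc le_rfl (by omega))) fun t => hgrow t hy

end FiniteType

section Transitivity

lemma smul_eq_of_le_smul [Group G] {H : Subgroup G} (hH : H.index ≠ 0) {β : MulAut G}
    (h : H ≤ β • H) : β • H = H := by
  have hindex : (β • H).index = H.index := Subgroup.index_map_of_bijective β.bijective H
  have hrel := Subgroup.relIndex_mul_index h
  rw [hindex, Nat.mul_eq_right hH] at hrel
  exact le_antisymm (Subgroup.relIndex_eq_one.1 hrel) h

lemma zpow_apply_mem_of_smul_eq [Group G] {α : MulAut G} {H : Subgroup G} (hH : α • H = H)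
    (n : ℤ) {y : G} (hy : y ∈ H) : (α ^ n) y ∈ H := by
  have hn : α ^ n ∈ MulAction.stabilizer (MulAut G) H :=
    zpow_mem (MulAction.mem_stabilizer_iff.2 hH) n
  rw [← MulAction.mem_stabilizer_iff.1 hn]
  exact Subgroup.smul_mem_pointwise_smul y _ H hy

variable [Group G] [TopologicalSpace G] [IsTopologicalGroup G] {α : MulAut G}

lemma eq_top_of_smul_eq (htt : ∃ x : G, Dense (Set.range fun n : ℤ => (α ^ n) x))
    {H : Subgroup G} (hHo : IsOpen (H : Set G)) (hH : α • H = H) : H = ⊤ := by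
  obtain ⟨x, hx⟩ := htt
  obtain ⟨_, ⟨n₀, rfl⟩, hn₀⟩ := hx.exists_mem_open hHo ⟨1, H.one_mem⟩
  have hxH : x ∈ H := by
    simpa [← zpow_add_apply] using zpow_apply_mem_of_smul_eq hH (-n₀) hn₀
  refine eq_top_iff.2 fun g _ => ?_
  obtain ⟨_, ⟨n₁, rfl⟩, hn₁⟩ :=
    hx.exists_mem_open (hHo.preimage (continuous_const_mul g⁻¹)) ⟨g, by simp⟩
  have hg : g = (α ^ n₁) x * (g⁻¹ * (α ^ n₁) x)⁻¹ := by group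
  rw [hg]
  exact H.mul_mem (zpow_apply_mem_of_smul_eq hH n₁ hxH) (H.inv_mem hn₁)

theorem exists_sup_window_Ici_eq_top [CompactSpace G]
    (htt : ∃ x : G, Dense (Set.range fun n : ℤ => (α ^ n) x))
    (hα : Continuous α) (hα' : Continuous ⇑α⁻¹) {N : Subgroup G} [N.Normal]
    (hN : IsOpen (N : Set G)) : ∃ m₀ : ℕ, N ⊔ α.window N (Ici m₀) = ⊤ := by
  obtain ⟨K, hK⟩ := exists_window_Icc_le_sup_window_Ici hα hα' hN
  set Λ : Subgroup G := ⨆ m : ℕ, α.window N (Icc m (m + K))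
  have hΛo : IsOpen (Λ : Set G) :=
    Subgroup.isOpen_mono (le_iSup (fun m : ℕ => α.window N (Icc m (m + K))) 0)
      (isOpen_window hα hα' hN (finite_Icc _ _))
  have hΛ : Λ ≤ α • Λ := iSup_le fun m y hy => by
    refine (Subgroup.mem_smul_pointwise_iff_exists _ _ _).2 ⟨α⁻¹ y, ?_, by simp [MulAut.smul_def]⟩
    refine le_iSup (fun m : ℕ => α.window N (Icc m (m + K))) (m + 1) (mem_window.2 fun n hn => ?_)
    rw [← zpow_neg_one, ← zpow_add_apply]
    exact mem_window.1 hy _ (by simp only [mem_Icc] at hn ⊢; omega)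
  have hΛtop : Λ = ⊤ := eq_top_of_smul_eq htt hΛo
    (smul_eq_of_le_smul (Λ.index_ne_zero_of_finite (hH := Λ.quotient_finite_of_isOpen hΛo)) hΛ)
  obtain ⟨K₁, hK₁⟩ := monotone_stabilizes hN (T := fun j : ℕ => N ⊔ α.window N (Ici j))
    (fun _ => le_sup_left)
    (fun i j hij => sup_le_sup_left (window_anti (Ici_subset_Ici.2 (by exact_mod_cast hij))) _)
  refine ⟨K₁, eq_top_iff.2 (hΛtop ▸ iSup_le fun m => (hK m).trans ?_)⟩
  rcases le_total m K₁ with h | h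
  · exact sup_le_sup_left (window_anti (Ici_subset_Ici.2 (by exact_mod_cast h))) _
  · exact (hK₁ m h).ge

end Transitivity

section Shadowing

variable [Group G] {α : MulAut G} {N : Subgroup G} {M : Subgroup G} {a : ℕ → G} {R : ℕ}

lemma zpow_apply_inv_mul_mem_of_error
    (ha : ∀ k, (α (a k))⁻¹ * a (k + 1) ∈ α.window N (Icc (-R) R)) {i : ℕ} (hi : i ≤ R + 1)
    (k : ℕ) : ((α ^ (i : ℤ)) (a k))⁻¹ * a (k + i) ∈ N := by
  induction i generalizing k with
  | zero => simp
  | succ i ih =>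
    have hε := mem_window.1 (ha k) i ⟨by omega, by omega⟩
    have h := N.mul_mem hε (ih (by omega) (k + 1))
    rwa [map_mul, map_inv, ← mul_assoc, mul_inv_cancel_right, ← mul_apply, ← zpow_add_one,
      add_right_comm] at h

lemma inv_mul_zpow_neg_apply_mem_of_error
    (ha : ∀ k, (α (a k))⁻¹ * a (k + 1) ∈ α.window N (Icc (-R) R)) {i : ℕ} (hi : i ≤ R)
    (k : ℕ) : (a k)⁻¹ * (α ^ (-(i : ℤ))) (a (k + i)) ∈ N := by
  induction i with
  | zero => simp
  | succ i ih =>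
    have hε := mem_window.1 (ha (k + i)) (-(i + 1 : ℤ)) ⟨by omega, by omega⟩
    have h := N.mul_mem (ih (by omega)) hε
    rw [map_mul, map_inv, ← mul_apply, ← zpow_add_one, neg_add_rev, neg_add_cancel_comm,
      mul_assoc, mul_inv_cancel_left] at h
    simpa [← add_assoc] using h

lemma error_mem_window_of_apply_mul_eq {v : ℕ → G}
    (hv : ∀ k, v k ∈ α.window N (Icc (-(R + 1)) (R + 1)))
    (hstep : ∀ k, α (a k) * α (v k) = a (k + 1) * v (k + 1)) (k : ℕ) :
    (α (a k))⁻¹ * a (k + 1) ∈ α.window N (Icc (-R) R) := by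
  rw [inv_mul_eq_iff_eq_mul.2 (by rw [← mul_assoc, hstep k, mul_inv_cancel_right])]
  refine Subgroup.mul_mem _ (mem_window.2 fun n hn => ?_)
    (Subgroup.inv_mem _ (window_anti (Icc_subset_Icc (by omega) (by omega)) (hv (k + 1))))
  rw [← mul_apply, ← zpow_add_one]
  exact mem_window.1 (hv k) _ (by simp only [mem_Icc] at hn ⊢; omega)

lemma exists_mul_tracks_succ [hNn : N.Normal] (hMα : ∀ (k : ℤ), ∀ y ∈ M, (α ^ k) y ∈ M)
    (hstab : ∀ j : ℕ, R ≤ j →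
      N ⊔ (M ⊓ α.window N (Icc (-R) (-1))) = N ⊔ (M ⊓ α.window N (Icc (-j) (-1))))
    (haM : ∀ k, a k ∈ M) (ha : ∀ k, (α (a k))⁻¹ * a (k + 1) ∈ α.window N (Icc (-R) R))
    {f : ℕ} (hf : R ≤ f) {ν : G} (hν : ν ∈ M)
    (htrack : ∀ n < f, (a n)⁻¹ * (α ^ (n : ℤ)) ν ∈ N) :
    ∃ δ ∈ M, ∀ n ≤ f, (a n)⁻¹ * (α ^ (n : ℤ)) (ν * δ) ∈ N := by
  set ζ := ((α ^ (f : ℤ)) ν)⁻¹ * a f with hζ_def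
  have hζ : ζ ∈ M ⊓ α.window N (Icc (-R) (-1)) := by
    refine ⟨M.mul_mem (M.inv_mem (hMα _ _ hν)) (haM f), mem_window.2 fun n hn => ?_⟩
    simp only [mem_Icc] at hn
    obtain ⟨i, rfl⟩ : ∃ i : ℕ, n = -(i : ℤ) := ⟨n.natAbs, by omega⟩
    have hback := inv_mul_zpow_neg_apply_mem_of_error ha (i := i) (by omega) (f - i)
    rw [Nat.sub_add_cancel (by omega)] at hback
    have hsplit : (α ^ (-(i : ℤ))) ζ = ((a (f - i))⁻¹ * (α ^ ((f - i : ℕ) : ℤ)) ν)⁻¹ *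
        ((a (f - i))⁻¹ * (α ^ (-(i : ℤ))) (a f)) := by
      rw [hζ_def, map_mul, map_inv, ← zpow_add_apply,
        show -(i : ℤ) + f = ((f - i : ℕ) : ℤ) by omega]
      group
    rw [hsplit]
    exact N.mul_mem (N.inv_mem (htrack _ (by omega))) hback
  -- stabilisation turns the `R` steps of control of `ζ` into `f` steps, up to `w ∈ N`
  obtain ⟨w, hw, q, hq, hwq⟩ :=
    Subgroup.mem_sup_of_normal_left.1 (hstab f hf ▸ Subgroup.mem_sup_right hζ)
  refine ⟨(α ^ (-(f : ℤ))) q, hMα _ _ hq.1, fun n hn => ?_⟩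
  rw [map_mul, ← mul_assoc, ← zpow_add_apply]
  rcases hn.lt_or_eq with hn | rfl
  · exact N.mul_mem (htrack n hn) (mem_window.1 hq.2 _ ⟨by omega, by omega⟩)
  · have hconj : (a n)⁻¹ * (α ^ (n : ℤ)) ν * q = ζ⁻¹ * w⁻¹ * ζ := by
      rw [eq_inv_mul_of_mul_eq hwq, hζ_def]
      group
    rw [add_neg_cancel, zpow_zero, one_apply, hconj]
    simpa using hNn.conj_mem _ (N.inv_mem hw) ζ⁻¹

variable [TopologicalSpace G] [IsTopologicalGroup G] [CompactSpace G] [N.Normal]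

theorem exists_shadow (hα : Continuous α) (hα' : Continuous ⇑α⁻¹) (hN : IsOpen (N : Set G))
    (hM : IsClosed (M : Set G)) (hMα : ∀ (k : ℤ), ∀ y ∈ M, (α ^ k) y ∈ M) :
    ∃ R : ℕ, ∀ a : ℕ → G, (∀ k, a k ∈ M) →
      (∀ k, (α (a k))⁻¹ * a (k + 1) ∈ α.window N (Icc (-R) R)) →
      ∃ ν ∈ M, ∀ k : ℕ, (a k)⁻¹ * (α ^ (k : ℤ)) ν ∈ N := by
  obtain ⟨R, hR⟩ := antitone_stabilizes hN
    (T := fun j : ℕ => N ⊔ (M ⊓ α.window N (Icc (-j) (-1)))) (fun _ => le_sup_left)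
    (fun i j hij => sup_le_sup_left
      (inf_le_inf_left _ (window_anti (Icc_subset_Icc (by omega) le_rfl))) _)
  refine ⟨R, fun a haM ha => ?_⟩
  set Z : ℕ → Set G := fun t => M ∩ ⋂ n ∈ Iic (R + t),
    (fun ν => (a n)⁻¹ * (α ^ (n : ℤ)) ν) ⁻¹' N
  have hZcl : ∀ t, IsClosed (Z t) := fun t => hM.inter <| isClosed_biInter fun n _ =>
    (N.isClosed_of_isOpen hN).preimage (continuous_const.mul (continuous_zpow hα hα' n))
  have hZne : ∀ t, (Z t).Nonempty := by
    intro t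
    induction t with
    | zero =>
      refine ⟨a 0, haM 0, mem_iInter₂.2 fun n hn => ?_⟩
      simpa using N.inv_mem (zpow_apply_inv_mul_mem_of_error ha (i := n) (by simp at hn; omega) 0)
    | succ t ih =>
      obtain ⟨ν, hνM, hν⟩ := ih
      rw [mem_iInter₂] at hν
      obtain ⟨δ, hδ, h⟩ := exists_mul_tracks_succ hMα hR haM ha (f := R + t + 1) (by omega) hνM
        fun n hn => hν n (by simp; omega)
      exact ⟨ν * δ, M.mul_mem hνM hδ, mem_iInter₂.2 fun n hn => h n (by simp at hn; omega)⟩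
  obtain ⟨ν, hν⟩ := IsCompact.nonempty_iInter_of_sequence_nonempty_isCompact_isClosed Z
    (fun t => inter_subset_inter_right _
      (biInter_subset_biInter_left (Iic_subset_Iic.2 (by omega))))
    hZne (hZcl 0).isCompact hZcl
  rw [mem_iInter] at hν
  exact ⟨ν, (hν 0).1, fun k => mem_iInter₂.1 (hν k).2 k (by simp)⟩

end Shadowing

section TailConstraints

variable [Group G] {α : MulAut G} {q q' : Set (Subgroup G × ℕ)} {y : G}

/-- A pair `(P, m) ∈ q` stands for the tail constraint `α^n y ∈ P` for all `n ≥ m`. -/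
def tailSet (α : MulAut G) (q : Set (Subgroup G × ℕ)) : Set G :=
  ⋂ P ∈ q, (α.window P.1 (Ici (P.2 : ℤ)) : Set G)

def core (α : MulAut G) (q : Set (Subgroup G × ℕ)) : Subgroup G :=
  ⨅ P ∈ q, α.window P.1 univ

lemma mem_tailSet : y ∈ α.tailSet q ↔ ∀ P ∈ q, ∀ n : ℤ, P.2 ≤ n → (α ^ n) y ∈ P.1 := by
  simp [tailSet]

lemma mem_core : y ∈ α.core q ↔ ∀ P ∈ q, ∀ n : ℤ, (α ^ n) y ∈ P.1 := by
  simp [core, Subgroup.mem_iInf]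

lemma zpow_apply_mem_core (k : ℤ) (hy : y ∈ α.core q) : (α ^ k) y ∈ α.core q :=
  mem_core.2 fun P hP n => by rw [← zpow_add_apply]; exact mem_core.1 hy P hP _

lemma core_le {P : Subgroup G × ℕ} (hP : P ∈ q) : α.core q ≤ P.1 :=
  fun _ hy => by simpa using mem_core.1 hy P hP 0

lemma core_anti (h : q ⊆ q') : α.core q' ≤ α.core q :=
  fun _ hy => mem_core.2 fun P hP => mem_core.1 hy P (h hP)

lemma mul_mem_tailSet (hy : y ∈ α.tailSet q) {c : G} (hc : c ∈ α.core q) :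
    y * c ∈ α.tailSet q :=
  mem_tailSet.2 fun P hP n hn => by
    rw [map_mul]; exact P.1.mul_mem (mem_tailSet.1 hy P hP n hn) (mem_core.1 hc P hP n)

lemma tailSet_anti (h : q ⊆ q') : α.tailSet q' ⊆ α.tailSet q :=
  biInter_subset_biInter_left h

lemma tailSet_insert {P : Subgroup G × ℕ} :
    α.tailSet (insert P q) = (α.window P.1 (Ici (P.2 : ℤ)) : Set G) ∩ α.tailSet q :=
  biInter_insert _ _ _

lemma tailSet_sUnion {c : Set (Set (Subgroup G × ℕ))} :
    α.tailSet (⋃₀ c) = ⋂ q ∈ c, α.tailSet q := by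
  ext y
  simp only [mem_tailSet, mem_sUnion, mem_iInter]
  exact ⟨fun h q hq P hP => h P ⟨q, hq, hP⟩, fun h P ⟨q, hq, hP⟩ => h q hq P hP⟩

variable [TopologicalSpace G]

lemma isClosed_tailSet (hα : Continuous α) (hα' : Continuous ⇑α⁻¹)
    (hq : ∀ P ∈ q, IsClosed (P.1 : Set G)) : IsClosed (α.tailSet q) :=
  isClosed_biInter fun P hP => isClosed_window hα hα' (hq P hP) _

lemma nonempty_inter_tailSet_sUnion [CompactSpace G] (hα : Continuous α)
    (hα' : Continuous ⇑α⁻¹) {C : Set G} (hC : IsClosed C) {c : Set (Set (Subgroup G × ℕ))}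
    (hcl : ∀ q ∈ c, ∀ P ∈ q, IsClosed (P.1 : Set G)) (hch : IsChain (· ⊆ ·) c)
    (hc : c.Nonempty) (hne : ∀ q ∈ c, (C ∩ α.tailSet q).Nonempty) :
    (C ∩ α.tailSet (⋃₀ c)).Nonempty := by
  have : Nonempty c := hc.to_subtype
  have hqcl : ∀ q : c, IsClosed (C ∩ α.tailSet q) :=
    fun q => hC.inter (isClosed_tailSet hα hα' (hcl q q.2))
  obtain ⟨y, hy⟩ := IsCompact.nonempty_iInter_of_directed_nonempty_isCompact_isClosed
    (fun q : c => C ∩ α.tailSet q)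
    (fun q q' => (hch.total q.2 q'.2).elim
      (fun h => ⟨q', inter_subset_inter_right _ (tailSet_anti h), subset_rfl⟩)
      (fun h => ⟨q, subset_rfl, inter_subset_inter_right _ (tailSet_anti h)⟩))
    (fun q => hne q q.2) (fun q => (hqcl q).isCompact) hqcl
  rw [mem_iInter] at hy
  obtain ⟨q₁, hq₁⟩ := hc
  rw [tailSet_sUnion]
  exact ⟨y, (hy ⟨q₁, hq₁⟩).1, mem_iInter₂.2 fun q hq => (hy ⟨q, hq⟩).2⟩

lemma isClosed_core (hα : Continuous α) (hα' : Continuous ⇑α⁻¹)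
    (hq : ∀ P ∈ q, IsClosed (P.1 : Set G)) : IsClosed (α.core q : Set G) := by
  simp only [core, Subgroup.coe_iInf]
  exact isClosed_biInter fun P hP => isClosed_window hα hα' (hq P hP) _

lemma eventually_mem_of_core_subset [CompactSpace G] (hα : Continuous α)
    (hα' : Continuous ⇑α⁻¹) (hq : ∀ P ∈ q, IsClosed (P.1 : Set G)) (hy : y ∈ α.tailSet q)
    {U : Set G} (hU : IsOpen U) (hcore : (α.core q : Set G) ⊆ U) :
    ∀ᶠ n : ℕ in atTop, (α ^ (n : ℤ)) y ∈ U := by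
  by_contra h
  -- a cluster point of the forward orbit outside `U` would lie in `core q`
  obtain ⟨z, hzU, hz⟩ := hU.isClosed_compl.isCompact.exists_mapClusterPt_of_frequently
    (not_eventually.1 h)
  refine hzU (hcore (mem_core.2 fun P hP k => ?_))
  refine (hq P hP).mem_of_mapClusterPt
    (hz.continuousAt_comp (continuous_zpow hα hα' k).continuousAt)
    (eventually_atTop.2 ⟨(P.2 - k).toNat, fun n hn => ?_⟩)
  simp only [Function.comp_apply, ← zpow_add_apply]
  exact mem_tailSet.1 hy P hP _ (by omega)

theorem exists_mul_mem_window_Ici [IsTopologicalGroup G] [CompactSpace G] (hα : Continuous α)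
    (hα' : Continuous ⇑α⁻¹) (hq : ∀ P ∈ q, IsClosed (P.1 : Set G)) (hy : y ∈ α.tailSet q)
    {N : Subgroup G} [hNn : N.Normal] (hN : IsOpen (N : Set G)) :
    ∃ c ∈ α.core q, ∃ m : ℕ, y * c ∈ α.window N (Ici m) := by
  obtain ⟨R, hR⟩ := exists_shadow hα hα' hN (isClosed_core hα hα' hq)
    fun k _ => zpow_apply_mem_core k
  set V := α.window N (Icc (-(R + 1)) (R + 1))
  have hVo : IsOpen (V : Set G) := isOpen_window hα hα' hN (finite_Icc _ _)
  obtain ⟨m, hm⟩ := eventually_atTop.1 <| eventually_mem_of_core_subset hα hα' hq hy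
    (hVo.mul_left (s := α.core q)) fun z hz => ⟨z, hz, 1, V.one_mem, mul_one z⟩
  -- the tail `α^(m+k) y = a k * v k` is a pseudo-orbit `a` in `core q` with errors from `V`
  choose a ha v hv hav using fun k : ℕ => hm (m + k) le_self_add
  replace hav : ∀ k, a k * v k = (α ^ ((m + k : ℕ) : ℤ)) y := hav
  have herr := error_mem_window_of_apply_mul_eq hv fun k => by
    rw [← map_mul, hav, hav,
      show ((m + (k + 1) : ℕ) : ℤ) = 1 + ((m + k : ℕ) : ℤ) by push_cast; ring,
      zpow_add_apply, zpow_one]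
  obtain ⟨ν, hνM, hν⟩ := hR a ha herr
  refine ⟨(α ^ (-(m : ℤ))) ν⁻¹, zpow_apply_mem_core _ (inv_mem hνM), m,
    mem_window.2 fun n hn => ?_⟩
  obtain ⟨k, rfl⟩ : ∃ k : ℕ, n = ((m + k : ℕ) : ℤ) :=
    ⟨(n - m).toNat, by simp only [mem_Ici] at hn; omega⟩
  have hsplit : (α ^ ((m + k : ℕ) : ℤ)) (y * (α ^ (-(m : ℤ))) ν⁻¹) =
      a k * (v k * ((a k)⁻¹ * (α ^ (k : ℤ)) ν)⁻¹) * (a k)⁻¹ := by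
    rw [map_mul, ← hav, ← zpow_add_apply, show ((m + k : ℕ) : ℤ) + -m = k by push_cast; ring,
      map_inv]
    group
  have hvN : v k ∈ N := by simpa using mem_window.1 (hv k) 0 ⟨by omega, by omega⟩
  rw [hsplit]
  exact hNn.conj_mem _ (N.mul_mem hvN (N.inv_mem (hν k))) _

end TailConstraints

section Contraction

lemma conSet_eq [Group G] [TopologicalSpace G] {α : MulAut G} :
    conSet α = {y | Tendsto (fun n : ℕ => (α ^ (n : ℤ)) y) atTop (𝓝 1)} := by
  simp [conSet]

variable [Group G] [TopologicalSpace G] [IsTopologicalGroup G] [CompactSpace G]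
  [TotallyDisconnectedSpace G] {α : MulAut G}

lemma exists_normal_isOpen_subset {U : Set G} (hU : IsOpen U) (h1 : (1 : G) ∈ U) :
    ∃ N : Subgroup G, N.Normal ∧ IsOpen (N : Set G) ∧ (N : Set G) ⊆ U := by
  obtain ⟨H, hH⟩ := ProfiniteGrp.exist_openNormalSubgroup_sub_open_nhds_of_one hU h1
  exact ⟨H.toSubgroup, H.isNormal', H.isOpen, hH⟩

lemma tendsto_nhds_one_iff_eventually_mem {ι : Type*} {l : Filter ι} {u : ι → G} :
    Tendsto u l (𝓝 1) ↔
      ∀ N : Subgroup G, N.Normal → IsOpen (N : Set G) → ∀ᶠ i in l, u i ∈ N := by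
  refine ⟨fun h N _ hN => h.eventually (hN.mem_nhds N.one_mem), fun h => ?_⟩
  refine tendsto_nhds.2 fun s hs h1 => ?_
  obtain ⟨N, hNn, hNo, hNs⟩ := exists_normal_isOpen_subset hs h1
  exact (h N hNn hNo).mono fun _ hi => hNs hi

theorem exists_mem_tendsto_one (hα : Continuous α) (hα' : Continuous ⇑α⁻¹) {C : Set G}
    (hC : IsClosed C) {q₀ : Set (Subgroup G × ℕ)} (hq₀ : ∀ P ∈ q₀, IsClosed (P.1 : Set G))
    (hCq₀ : ∀ y ∈ C, ∀ c ∈ α.core q₀, y * c ∈ C) (hne : (C ∩ α.tailSet q₀).Nonempty) :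
    ∃ y ∈ C, Tendsto (fun n : ℕ => (α ^ (n : ℤ)) y) atTop (𝓝 1) := by
  set 𝒵 : Set (Set (Subgroup G × ℕ)) :=
    {q | q₀ ⊆ q ∧ (∀ P ∈ q, IsClosed (P.1 : Set G)) ∧ (C ∩ α.tailSet q).Nonempty}
  have hchain : ∀ c ⊆ 𝒵, IsChain (· ⊆ ·) c → c.Nonempty → ∃ ub ∈ 𝒵, ∀ s ∈ c, s ⊆ ub := by
    rintro c hc hch ⟨q₁, hq₁⟩
    refine ⟨⋃₀ c, ⟨(hc hq₁).1.trans (subset_sUnion_of_mem hq₁),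
      fun P ⟨q, hq, hP⟩ => (hc hq).2.1 P hP, ?_⟩, fun _ => subset_sUnion_of_mem⟩
    exact nonempty_inter_tailSet_sUnion hα hα' hC (fun q hq => (hc hq).2.1) hch ⟨q₁, hq₁⟩
      fun q hq => (hc hq).2.2
  obtain ⟨q, -, hqmax⟩ := zorn_subset_nonempty 𝒵 hchain q₀ ⟨subset_rfl, hq₀, hne⟩
  obtain ⟨hq₀q, hqcl, y, hyC, hy⟩ := hqmax.prop
  refine ⟨y, hyC, tendsto_nhds_one_iff_eventually_mem.2 fun N hNn hN => ?_⟩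
  obtain ⟨c, hc, m, hm⟩ := exists_mul_mem_window_Ici hα hα' hqcl hy hN
  have hins : insert (N, m) q ∈ 𝒵 := by
    refine ⟨hq₀q.trans (subset_insert _ _), ?_, y * c, hCq₀ y hyC c (core_anti hq₀q hc), ?_⟩
    · rintro P (rfl | hP)
      exacts [N.isClosed_of_isOpen hN, hqcl P hP]
    · rw [tailSet_insert]
      exact ⟨hm, mul_mem_tailSet hy hc⟩
  have hmem : (N, m) ∈ q := (hqmax.eq_of_subset hins (subset_insert _ _)).symm ▸ mem_insert _ _
  exact eventually_atTop.2 ⟨m, fun n hn => mem_tailSet.1 hy _ hmem n (by exact_mod_cast hn)⟩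

theorem dense_conSet (htt : ∃ x : G, Dense (Set.range fun n : ℤ => (α ^ n) x))
    (hα : Continuous α) (hα' : Continuous ⇑α⁻¹) : Dense (conSet α) := by
  refine dense_iff_inter_open.2 fun U hU ⟨g, hg⟩ => ?_
  obtain ⟨N, hNn, hNo, hNU⟩ := exists_normal_isOpen_subset
    (hU.preimage (continuous_const_mul g)) (by simpa using hg)
  have hNc : IsClosed (N : Set G) := N.isClosed_of_isOpen hNo
  obtain ⟨m₀, hm₀⟩ := exists_sup_window_Ici_eq_top htt hα hα' hNo
  obtain ⟨u, hu, c, hc, rfl⟩ := Subgroup.mem_sup_of_normal_left.1 (hm₀ ▸ Subgroup.mem_top g)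
  have hcC : (u * c)⁻¹ * c ∈ N := by
    simpa [mul_assoc] using hNn.conj_mem _ (N.inv_mem hu) c⁻¹
  obtain ⟨y, hyC, hy⟩ := exists_mem_tendsto_one hα hα' (C := (fun z => (u * c)⁻¹ * z) ⁻¹' N)
    (hNc.preimage (continuous_const_mul _)) (q₀ := {(N, m₀)}) (by simpa using hNc)
    (fun y hy c' hc' => by
      simpa [mul_assoc] using N.mul_mem hy (core_le (mem_singleton _) hc'))
    ⟨c, hcC, by simpa [tailSet] using hc⟩
  exact ⟨y, by simpa [mul_assoc] using hNU hyC, by rwa [conSet_eq]⟩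

end Contraction

section Homoclinic

lemma exists_dense_orbit_inv [Group G] [TopologicalSpace G] {α : MulAut G}
    (htt : ∃ x : G, Dense (Set.range fun n : ℤ => (α ^ n) x)) :
    ∃ x : G, Dense (Set.range fun n : ℤ => (α⁻¹ ^ n) x) := by
  obtain ⟨x, hx⟩ := htt
  refine ⟨x, ?_⟩
  have horbit : (fun n : ℤ => (α⁻¹ ^ n) x) = (fun n : ℤ => (α ^ n) x) ∘ Neg.neg :=
    funext fun n => by simp [inv_zpow']
  rwa [horbit, neg_surjective.range_comp]

variable [Group G] [TopologicalSpace G] [IsTopologicalGroup G]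

def conSubgroup (α : MulAut G) : Subgroup G where
  carrier := conSet α
  one_mem' := by simp [conSet, tendsto_const_nhds]
  mul_mem' {x y} hx hy := by
    change Tendsto _ _ _ at hx hy ⊢
    simpa using hx.mul hy
  inv_mem' {x} hx := by
    change Tendsto _ _ _ at hx ⊢
    simpa using hx.inv

lemma coe_conSubgroup_inf (α : MulAut G) :
    ((conSubgroup α ⊓ conSubgroup α⁻¹ : Subgroup G) : Set G) = bcgSet α := rfl

lemma continuous_commutatorElement : Continuous (Function.uncurry fun p r : G => ⁅p, r⁆) := by
  simp only [commutatorElement_def]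
  fun_prop

lemma commutator_mem_bcgSet [CompactSpace G] [TotallyDisconnectedSpace G] {α : MulAut G}
    {p r : G} (hp : p ∈ conSet α) (hr : r ∈ conSet α⁻¹) : ⁅p, r⁆ ∈ bcgSet α := by
  change Tendsto _ _ _ at hp hr
  rw [tendsto_nhds_one_iff_eventually_mem] at hp hr
  refine ⟨tendsto_nhds_one_iff_eventually_mem.2 fun N hNn hN => ?_,
    tendsto_nhds_one_iff_eventually_mem.2 fun N hNn hN => ?_⟩
  · filter_upwards [hp N hNn hN] with n hn
    rw [map_commutatorElement]
    exact Subgroup.commutator_le_left N ⊤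
      (Subgroup.commutator_mem_commutator hn (Subgroup.mem_top _))
  · filter_upwards [hr N hNn hN] with n hn
    rw [map_commutatorElement]
    exact Subgroup.commutator_le_right ⊤ N
      (Subgroup.commutator_mem_commutator (Subgroup.mem_top _) hn)

end Homoclinic

end MulAut

open MulAut in
theorem con_dense_and_commutator_subset_closure_bcg_general
    [Group G] [TopologicalSpace G] [IsTopologicalGroup G]
    [TotallyDisconnectedSpace G] [CompactSpace G]
    (α : MulAut G) (hαc : Continuous ⇑α) (hαc' : Continuous ⇑(α⁻¹))
    (htt : ∃ x : G, Dense (Set.range fun n : ℤ => (α ^ n) x)) :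
    Dense (conSet α) ∧ (commutator G : Set G) ⊆ closure (bcgSet α) := by
  have hcon := dense_conSet htt hαc hαc'
  have hcon' : Dense (conSet α⁻¹) :=
    dense_conSet (exists_dense_orbit_inv htt) hαc' (by rwa [inv_inv])
  refine ⟨hcon, ?_⟩
  rw [← coe_conSubgroup_inf, ← Subgroup.topologicalClosure_coe, commutator_def]
  exact Subgroup.commutator_le.2 fun p _ r _ =>
    map_mem_closure₂ continuous_commutatorElement (hcon.closure_eq ▸ Set.mem_univ p)
      (hcon'.closure_eq ▸ Set.mem_univ r) fun _ hp _ hr => commutator_mem_bcgSet hp hr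

/-- For a topologically transitive compact pair, `con α` is dense in `G`
and the closure of `bcg α` contains the commutator subgroup. -/
theorem con_dense_and_commutator_subset_closure_bcg
    [Group G] [TopologicalSpace G] [IsTopologicalGroup G] [T2Space G]
    [TotallyDisconnectedSpace G] [CompactSpace G]
    (α : MulAut G) (hαc : Continuous ⇑α) (hαc' : Continuous ⇑(α⁻¹))
    (htt : ∃ x : G, Dense (Set.range fun n : ℤ => (α ^ n) x)) :
    Dense (conSet α) ∧ (commutator G : Set G) ⊆ closure (bcgSet α) :=
  con_dense_and_commutator_subset_closure_bcg_general α hαc hαc' htt
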